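/- arXiv:2504.00116 — 2 statements merged into one kernel-verified Lean document; each statement's English description precedes it below -/
import Mathlib

section
/- If integers a, b satisfy 10b² - a² = c > 0 and √c(√10 - 3) ≤ a + b√10 ≤ √c(√10 + 3), then |a| ≤ 3√c and √(c/10) ≤ b ≤ √c. -/
/-!
Put `s = a + b√10` and `s' = b√10 - a`, so that `s s' = c = (√c)²`. Since
`(√10 - 3)(√10 + 3) = 1`, the interval `[√c(√10 - 3), √c(√10 + 3)]` is mapped onto itself by
`s ↦ c / s`, so `s'` lies in it as well. Hence `2|a| = |s - s'|` is at most the length `6√c` of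
the interval, and by convexity of `s ↦ s + c / s` the sum `2b√10 = s + s'` is at most its value
`2√10 √c` at the endpoints. Finally `b > 0` and `10b² = c + a² ≥ c`.
-/

section ReciprocalInterval

variable {x y t m k : ℝ}

theorem mem_Icc_of_mul_eq_sq (hm : 0 < m) (hmk : m * k = 1) (ht : 0 < t) (hxy : x * y = t ^ 2)
    (hx : x ∈ Set.Icc (t * m) (t * k)) : y ∈ Set.Icc (t * m) (t * k) := by
  obtain ⟨hlo, hhi⟩ := hx
  have hx0 : 0 < x := lt_of_lt_of_le (mul_pos ht hm) hlo
  constructor <;> nlinarith [mul_le_mul_of_nonneg_left hhi hm.le]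

theorem add_le_of_mul_eq_sq (hmk : m * k = 1) (hxy : x * y = t ^ 2) (hx0 : 0 < x)
    (hx : x ∈ Set.Icc (t * m) (t * k)) : x + y ≤ t * (m + k) := by
  obtain ⟨hlo, hhi⟩ := hx
  have hquad : x * (x + y - t * (m + k)) = (x - t * m) * (x - t * k) := by
    linear_combination hxy - t ^ 2 * hmk
  have : x * (x + y - t * (m + k)) ≤ 0 := by
    rw [hquad]; exact mul_nonpos_of_nonneg_of_nonpos (by linarith) (by linarith)
  linarith [nonpos_of_mul_nonpos_right this hx0]

end ReciprocalInterval

theorem sqrt_ten_sub_three_mul_add_three : (√10 - 3) * (√10 + 3) = 1 := by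
  ring_nf; norm_num

theorem three_lt_sqrt_ten : 3 < √10 := by
  rw [Real.lt_sqrt (by norm_num)]; norm_num

theorem hyperbola_box (a b c : ℤ) (h : 10 * b^2 - a^2 = c) (hc : 0 < c)
    (h1 : Real.sqrt c * (Real.sqrt 10 - 3) ≤ (a : ℝ) + b * Real.sqrt 10)
    (h2 : (a : ℝ) + b * Real.sqrt 10 ≤ Real.sqrt c * (Real.sqrt 10 + 3)) :
    (|a| : ℝ) ≤ 3 * Real.sqrt c ∧
    Real.sqrt ((c : ℝ) / 10) ≤ (b : ℝ) ∧ (b : ℝ) ≤ Real.sqrt c := by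
  have hcR : (0 : ℝ) < c := by exact_mod_cast hc
  have ht : 0 < √(c : ℝ) := Real.sqrt_pos.mpr hcR
  have hm : 0 < √10 - 3 := sub_pos.mpr three_lt_sqrt_ten
  have hs : (a : ℝ) + b * √10 ∈ Set.Icc (√c * (√10 - 3)) (√c * (√10 + 3)) := ⟨h1, h2⟩
  have hprod : ((a : ℝ) + b * √10) * (b * √10 - a) = √(c : ℝ) ^ 2 := by
    rw [Real.sq_sqrt hcR.le, ← h]
    push_cast
    linear_combination (b : ℝ) ^ 2 * Real.sq_sqrt (show (0 : ℝ) ≤ 10 by norm_num)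
  obtain ⟨hs'lo, hs'hi⟩ :=
    mem_Icc_of_mul_eq_sq hm sqrt_ten_sub_three_mul_add_three ht hprod hs
  have hsum := add_le_of_mul_eq_sq sqrt_ten_sub_three_mul_add_three hprod
    (lt_of_lt_of_le (mul_pos ht hm) h1) hs
  have hb : 0 < (b : ℝ) := by nlinarith
  refine ⟨abs_le.mpr ⟨by linarith, by linarith⟩, ?_, by nlinarith⟩
  rw [Real.sqrt_le_left hb.le, div_le_iff₀ (by norm_num), ← h]
  push_cast
  nlinarith [sq_nonneg (a : ℝ)]
end

section
/- Let t_k satisfy t_0 = 2, t_1 = 56, t_{k+2} = 38t_{k+1} - t_k. Then t_k ≠ ±10^u for all k ≥ 0 and all integers u ≥ 4. -/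
/-! Reduced modulo 9 the recurrence reads `t (k + 2) = 2 * t (k + 1) - t k`, so `t` is an
arithmetic progression mod 9 with difference `t 1 - t 0 = 54 ≡ 0`. Hence `t k ≡ 2 [ZMOD 9]`
for every `k`, whereas `10 ≡ 1` gives `±10 ^ u ≡ ±1 [ZMOD 9]`. -/

theorem eq_add_mul_sub_of_add_two_eq_two_mul_sub {R : Type*} [CommRing R] (s : ℕ → R)
    (hs : ∀ k, s (k + 2) = 2 * s (k + 1) - s k) (k : ℕ) :
    s k = s 0 + k * (s 1 - s 0) := by
  induction k using Nat.twoStepInduction with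
  | zero => simp
  | one => simp
  | more k ih₀ ih₁ =>
    rw [hs, ih₀, ih₁]
    push_cast
    ring

theorem t_never_pm_power_of_ten (t : ℕ → ℤ)
    (h0 : t 0 = 2) (h1 : t 1 = 56)
    (hrec : ∀ k, t (k + 2) = 38 * t (k + 1) - t k) :
    ∀ k : ℕ, ∀ u : ℕ, 4 ≤ u → t k ≠ 10^u ∧ t k ≠ -(10^u) := by
  intro k u _
  have hrec₉ : ∀ k, (t (k + 2) : ZMod 9) = 2 * t (k + 1) - t k := fun k => by
    rw [hrec k]
    push_cast
    reduce_mod_char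
  have ht : (t k : ZMod 9) = 2 := by
    rw [eq_add_mul_sub_of_add_two_eq_two_mul_sub (fun k => (t k : ZMod 9)) hrec₉ k, h0, h1]
    reduce_mod_char
  have hpow : ((10 ^ u : ℤ) : ZMod 9) = 1 := by
    push_cast
    reduce_mod_char
    exact one_pow u
  constructor <;> rintro heq <;> rw [heq] at ht
  · rw [hpow] at ht
    exact absurd ht (by decide)
  · rw [Int.cast_neg, hpow] at ht
    exact absurd ht (by decide)
end
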